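/- arXiv:2209.05418 — 6 statements merged into one kernel-verified Lean document; each statement's English description precedes it below -/
import Mathlib

section
/- In the multi-parameter upper model with probabilities p_σ for each simplex σ of Δⁿ, the probability that the random hypergraph X (including each σ independently with probability p_σ) satisfies X̄ = Y equals (∏_{σ ∉ Y} (1−p_σ)) · (∏_{σ ∈ M(Y)} p_σ), where M(Y) is the set of maximal simplices of Y. -/
open Finset

/-- In the multi-parameter upper model on `Δⁿ` (all nonempty subsets of
`{0,…,n}`), where the random hypergraph `X` includes each simplex `σ` independently with
probability `p σ`, the probability that the minimal simplicial complex containing `X`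
equals a fixed simplicial complex `Y` is `(∏_{σ ∉ Y} (1 − p σ)) · (∏_{σ ∈ M(Y)} p σ)`,
where `M(Y)` is the set of maximal simplices of `Y`. -/
theorem upper_model_probability (n : ℕ) (p : Finset (Fin (n + 1)) → ℝ)
    (hp : ∀ σ, 0 ≤ p σ ∧ p σ ≤ 1)
    (Δ : Finset (Finset (Fin (n + 1)))) (hΔ : Δ = univ.filter (fun σ => σ ≠ ∅))
    (Y : Finset (Finset (Fin (n + 1)))) (hYΔ : Y ⊆ Δ)
    (hYdc : ∀ σ ∈ Y, ∀ ρ : Finset (Fin (n + 1)), ρ ⊆ σ → ρ ≠ ∅ → ρ ∈ Y) :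
    ∑ X ∈ Δ.powerset.filter
        (fun X => Δ.filter (fun σ => ∃ τ ∈ X, σ ⊆ τ) = Y),
      ((∏ σ ∈ X, p σ) * ∏ σ ∈ Δ \ X, (1 - p σ)) =
    (∏ σ ∈ Δ \ Y, (1 - p σ)) *
      ∏ σ ∈ Y.filter (fun σ => ∀ τ ∈ Y, σ ⊆ τ → σ = τ), p σ := by
  classical
  set M := Y.filter (fun σ => ∀ τ ∈ Y, σ ⊆ τ → σ = τ) with hM
  have hMY : M ⊆ Y := filter_subset _ _
  -- every simplex of Y is contained in a maximal one
  have hext : ∀ σ ∈ Y, ∃ τ ∈ M, σ ⊆ τ := by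
    intro σ hσ
    obtain ⟨τ, hτmem, hτmax⟩ := (Y.filter (fun τ => σ ⊆ τ)).exists_max_image
      (fun τ => τ.card) ⟨σ, by simp [hσ]⟩
    rw [mem_filter] at hτmem
    refine ⟨τ, ?_, hτmem.2⟩
    rw [hM, mem_filter]
    refine ⟨hτmem.1, fun τ' hτ' hsub => ?_⟩
    have hτ'mem : τ' ∈ Y.filter (fun τ => σ ⊆ τ) :=
      mem_filter.2 ⟨hτ', hτmem.2.trans hsub⟩
    exact Finset.eq_of_subset_of_card_le hsub (hτmax τ' hτ'mem)
  -- characterization of the fiber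
  have hchar : ∀ X, X ⊆ Δ →
      (Δ.filter (fun σ => ∃ τ ∈ X, σ ⊆ τ) = Y ↔ (M ⊆ X ∧ X ⊆ Y)) := by
    intro X hX
    constructor
    · intro h
      have hXY : X ⊆ Y := by
        intro τ hτ; rw [← h]; exact mem_filter.2 ⟨hX hτ, τ, hτ, Subset.rfl⟩
      refine ⟨?_, hXY⟩
      intro σ hσ
      rw [hM, mem_filter] at hσ
      have hσY : σ ∈ Y := hσ.1
      rw [← h, mem_filter] at hσY
      obtain ⟨τ, hτX, hστ⟩ := hσY.2
      have := hσ.2 τ (hXY hτX) hστ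
      rwa [this]
    · rintro ⟨hMX, hXY⟩
      apply Subset.antisymm
      · intro σ hσ
        rw [mem_filter] at hσ
        obtain ⟨hσΔ, τ, hτ, hστ⟩ := hσ
        have hσne : σ ≠ ∅ := by rw [hΔ] at hσΔ; exact (mem_filter.1 hσΔ).2
        exact hYdc τ (hXY hτ) σ hστ hσne
      · intro σ hσ
        obtain ⟨τ, hτM, hστ⟩ := hext σ hσ
        exact mem_filter.2 ⟨hYΔ hσ, τ, hMX hτM, hστ⟩
  -- rewrite the index set as an image
  have hset : Δ.powerset.filter (fun X => Δ.filter (fun σ => ∃ τ ∈ X, σ ⊆ τ) = Y)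
      = (Y \ M).powerset.image (fun S => S ∪ M) := by
    ext X
    simp only [mem_image, mem_filter, mem_powerset]
    constructor
    · rintro ⟨hXΔ, hcl⟩
      obtain ⟨hMX, hXY⟩ := (hchar X hXΔ).1 hcl
      exact ⟨X \ M, sdiff_subset_sdiff hXY Subset.rfl,
        sdiff_union_of_subset hMX⟩
    · rintro ⟨S, hS, rfl⟩
      have hXY : S ∪ M ⊆ Y := union_subset (hS.trans sdiff_subset) hMY
      exact ⟨hXY.trans hYΔ,
        (hchar _ (hXY.trans hYΔ)).2 ⟨subset_union_right, hXY⟩⟩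
  have hinj : ∀ S ∈ (Y \ M).powerset, ∀ T ∈ (Y \ M).powerset,
      S ∪ M = T ∪ M → S = T := by
    intro S hS T hT h
    rw [mem_powerset] at hS hT
    have hSd : Disjoint S M := sdiff_disjoint.mono_left hS
    have hTd : Disjoint T M := sdiff_disjoint.mono_left hT
    calc S = (S ∪ M) \ M := by rw [union_sdiff_right, sdiff_eq_self_of_disjoint hSd]
    _ = (T ∪ M) \ M := by rw [h]
    _ = T := by rw [union_sdiff_right, sdiff_eq_self_of_disjoint hTd]
  rw [hset, Finset.sum_image hinj]
  have hterm : ∀ S ∈ (Y \ M).powerset,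
      ((∏ σ ∈ S ∪ M, p σ) * ∏ σ ∈ Δ \ (S ∪ M), (1 - p σ)) =
      ((∏ σ ∈ Δ \ Y, (1 - p σ)) * ∏ σ ∈ M, p σ) *
        ((∏ σ ∈ S, p σ) * ∏ σ ∈ (Y \ M) \ S, (1 - p σ)) := by
    intro S hS
    rw [mem_powerset] at hS
    have hSd : Disjoint S M := sdiff_disjoint.mono_left hS
    have hXY : S ∪ M ⊆ Y := union_subset (hS.trans sdiff_subset) hMY
    have h1 : ∏ σ ∈ S ∪ M, p σ = (∏ σ ∈ S, p σ) * ∏ σ ∈ M, p σ :=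
      prod_union hSd
    have h2 : Δ \ (S ∪ M) = (Δ \ Y) ∪ (Y \ (S ∪ M)) := by
      ext x
      have hx1 : x ∈ Y → x ∈ Δ := fun h => hYΔ h
      have hx2 : x ∈ S → x ∈ Y := fun h => hXY (mem_union_left _ h)
      have hx3 : x ∈ M → x ∈ Y := fun h => hMY h
      simp only [mem_sdiff, mem_union]; tauto
    have h3 : Disjoint (Δ \ Y) (Y \ (S ∪ M)) :=
      sdiff_disjoint.mono_right sdiff_subset
    have h4 : Y \ (S ∪ M) = (Y \ M) \ S := by
      ext x; simp only [mem_sdiff, mem_union]; tauto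
    rw [h1, h2, prod_union h3, h4]
    ring
  rw [Finset.sum_congr rfl hterm, ← Finset.mul_sum,
    ← Finset.prod_add (fun σ => p σ) (fun σ => 1 - p σ) (Y \ M)]
  simp
end

section
/- In the multi-parameter lower model, the probability that the random hypergraph X satisfies X̲ = Y equals (∏_{σ ∈ Y} p_σ) · (∏_{σ ∈ E(Y)} (1−p_σ)). -/
open Finset

/-!
`X̲ = Y` holds exactly when `X` contains `Y` and misses every minimal non-face `τ ∈ E(Y)`:
a simplex of `X̲` outside `Y` would contain such a `τ`, and then all faces of `τ` lie in `X`,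
so `τ ∈ X̲`. Hence the event fixes the coordinates in `Y ∪ E(Y)` only, and the remaining
coordinates sum out to `∏ (p σ + (1 - p σ)) = 1`.
-/

section BernoulliWeight

variable {β R : Type*} [DecidableEq β] [CommRing R] (p : β → R)

/-- The probability that the random subset of `Δ`, containing each `σ` independently with
probability `p σ`, is exactly `X`. -/
def bernoulliWeight (Δ X : Finset β) : R :=
  (∏ σ ∈ X, p σ) * ∏ σ ∈ Δ \ X, (1 - p σ)

theorem sum_bernoulliWeight_powerset (C : Finset β) :
    ∑ S ∈ C.powerset, bernoulliWeight p C S = 1 := by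
  simp [bernoulliWeight, ← prod_add]

variable {p} {Δ A B : Finset β}

theorem disjoint_of_subset_sdiff_union_left {S : Finset β} (hS : S ⊆ Δ \ (A ∪ B)) :
    Disjoint A S :=
  (disjoint_sdiff.mono_left subset_union_left).mono_right hS

theorem disjoint_of_subset_sdiff_union_right {S : Finset β} (hS : S ⊆ Δ \ (A ∪ B)) :
    Disjoint B S :=
  (disjoint_sdiff.mono_left subset_union_right).mono_right hS

theorem bernoulliWeight_union (hB : B ⊆ Δ) (hAB : Disjoint A B)
    {S : Finset β} (hS : S ⊆ Δ \ (A ∪ B)) :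
    bernoulliWeight p Δ (A ∪ S) =
      ((∏ σ ∈ A, p σ) * ∏ σ ∈ B, (1 - p σ)) * bernoulliWeight p (Δ \ (A ∪ B)) S := by
  have hcompl : Δ \ (A ∪ S) = B ∪ (Δ \ (A ∪ B)) \ S := by
    ext σ
    have := @hB σ
    have := @hS σ
    have : σ ∈ A → σ ∉ B := fun h => disjoint_left.1 hAB h
    simp only [mem_sdiff, mem_union] at *
    tauto
  have hB_rest : Disjoint B ((Δ \ (A ∪ B)) \ S) :=
    (disjoint_sdiff.mono_left subset_union_right).mono_right sdiff_subset
  rw [bernoulliWeight, bernoulliWeight, prod_union (disjoint_of_subset_sdiff_union_left hS),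
    hcompl, prod_union hB_rest]
  ring

theorem powerset_filter_superset_disjoint (hA : A ⊆ Δ) (hAB : Disjoint A B) :
    Δ.powerset.filter (fun X => A ⊆ X ∧ Disjoint B X) =
      (Δ \ (A ∪ B)).powerset.image (A ∪ ·) := by
  ext X
  simp only [mem_filter, mem_powerset, mem_image]
  constructor
  · rintro ⟨hXΔ, hAX, hBX⟩
    refine ⟨X \ A, fun σ hσ => ?_, union_sdiff_of_subset hAX⟩
    obtain ⟨hσX, hσA⟩ := mem_sdiff.1 hσ
    exact mem_sdiff.2 ⟨hXΔ hσX, by simp [hσA, disjoint_right.1 hBX hσX]⟩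
  · rintro ⟨S, hS, rfl⟩
    exact ⟨union_subset hA (hS.trans sdiff_subset), subset_union_left,
      disjoint_union_right.2 ⟨hAB.symm, disjoint_of_subset_sdiff_union_right hS⟩⟩

theorem sum_bernoulliWeight_filter_superset_disjoint (hA : A ⊆ Δ) (hB : B ⊆ Δ)
    (hAB : Disjoint A B) :
    ∑ X ∈ Δ.powerset.filter (fun X => A ⊆ X ∧ Disjoint B X), bernoulliWeight p Δ X =
      (∏ σ ∈ A, p σ) * ∏ σ ∈ B, (1 - p σ) := by
  have hinj : Set.InjOn (A ∪ ·) (Δ \ (A ∪ B)).powerset := by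
    intro S hS T hT hST
    rw [← union_sdiff_cancel_left (disjoint_of_subset_sdiff_union_left (mem_powerset.1 hS)),
      ← union_sdiff_cancel_left (disjoint_of_subset_sdiff_union_left (mem_powerset.1 hT))]
    exact congrArg (· \ A) hST
  rw [powerset_filter_superset_disjoint hA hAB, sum_image hinj,
    sum_congr rfl fun S hS => bernoulliWeight_union hB hAB (mem_powerset.1 hS), ← mul_sum,
    sum_bernoulliWeight_powerset, mul_one]

end BernoulliWeight

section LowerCore

variable {α : Type*} [DecidableEq α]

/-- `X̲`. -/
def lowerCore (Δ X : Finset (Finset α)) : Finset (Finset α) :=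
  Δ.filter (fun σ => σ ∈ X ∧ ∀ ρ ∈ Δ, ρ ⊆ σ → ρ ∈ X)

/-- `E(Y)`. -/
def minimalNonfaces (Δ Y : Finset (Finset α)) : Finset (Finset α) :=
  Δ.filter (fun σ => σ ∉ Y ∧ ∀ ρ ∈ Δ, ρ ⊂ σ → ρ ∈ Y)

variable {Δ Y : Finset (Finset α)}

theorem minimalNonfaces_subset : minimalNonfaces Δ Y ⊆ Δ :=
  filter_subset _ _

theorem disjoint_minimalNonfaces : Disjoint Y (minimalNonfaces Δ Y) :=
  disjoint_right.2 fun _ hσ => (mem_filter.1 hσ).2.1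

theorem exists_mem_minimalNonfaces_subset (σ : Finset α) (hσ : σ ∈ Δ) (hσY : σ ∉ Y) :
    ∃ τ ∈ minimalNonfaces Δ Y, τ ⊆ σ := by
  induction σ using Finset.strongInduction with
  | H σ ih =>
    by_cases h : ∃ ρ ∈ Δ, ρ ⊂ σ ∧ ρ ∉ Y
    · obtain ⟨ρ, hρ, hρσ, hρY⟩ := h
      obtain ⟨τ, hτ, hτρ⟩ := ih ρ hρσ hρ hρY
      exact ⟨τ, hτ, hτρ.trans hρσ.subset⟩
    · refine ⟨σ, mem_filter.2 ⟨hσ, hσY, fun ρ hρ hρσ => ?_⟩, subset_rfl⟩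
      by_contra hρY
      exact h ⟨ρ, hρ, hρσ, hρY⟩

theorem lowerCore_eq_iff (hYΔ : Y ⊆ Δ) (hY : ∀ σ ∈ Y, ∀ ρ ∈ Δ, ρ ⊆ σ → ρ ∈ Y)
    {X : Finset (Finset α)} :
    lowerCore Δ X = Y ↔ Y ⊆ X ∧ Disjoint (minimalNonfaces Δ Y) X := by
  constructor
  · intro h
    have hYX : Y ⊆ X := fun σ hσ => (mem_filter.1 (h ▸ hσ)).2.1
    refine ⟨hYX, disjoint_left.2 fun τ hτ hτX => ?_⟩
    obtain ⟨hτΔ, hτY, hfaces⟩ := mem_filter.1 hτ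
    refine hτY (h ▸ mem_filter.2 ⟨hτΔ, hτX, fun ρ hρ hρτ => ?_⟩)
    rcases eq_or_ssubset_of_subset hρτ with rfl | hρτ
    · exact hτX
    · exact hYX (hfaces ρ hρ hρτ)
  · rintro ⟨hYX, hEX⟩
    ext σ
    refine ⟨fun hσ => ?_, fun hσ => ?_⟩
    · obtain ⟨hσΔ, hσX, hfaces⟩ := mem_filter.1 hσ
      by_contra hσY
      obtain ⟨τ, hτ, hτσ⟩ := exists_mem_minimalNonfaces_subset σ hσΔ hσY
      exact disjoint_left.1 hEX hτ (hfaces τ (minimalNonfaces_subset hτ) hτσ)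
    · exact mem_filter.2 ⟨hYΔ hσ, hYX hσ, fun ρ hρ hρσ => hYX (hY σ hσ ρ hρ hρσ)⟩

end LowerCore

theorem lower_model_probability_general (n : ℕ) (p : Finset (Fin (n + 1)) → ℝ)
    (Δ : Finset (Finset (Fin (n + 1)))) (hΔ : Δ = univ.filter (fun σ => σ ≠ ∅))
    (Y : Finset (Finset (Fin (n + 1)))) (hYΔ : Y ⊆ Δ)
    (hYdc : ∀ σ ∈ Y, ∀ ρ : Finset (Fin (n + 1)), ρ ⊆ σ → ρ ≠ ∅ → ρ ∈ Y) :
    ∑ X ∈ Δ.powerset.filter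
        (fun X => Δ.filter (fun σ => σ ∈ X ∧ ∀ ρ ∈ Δ, ρ ⊆ σ → ρ ∈ X) = Y),
      ((∏ σ ∈ X, p σ) * ∏ σ ∈ Δ \ X, (1 - p σ)) =
    (∏ σ ∈ Y, p σ) *
      ∏ σ ∈ Δ.filter (fun σ => σ ∉ Y ∧ ∀ ρ ∈ Δ, ρ ⊂ σ → ρ ∈ Y), (1 - p σ) := by
  have hY : ∀ σ ∈ Y, ∀ ρ ∈ Δ, ρ ⊆ σ → ρ ∈ Y := fun σ hσ ρ hρ hρσ =>
    hYdc σ hσ ρ hρσ (by simpa [hΔ] using hρ)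
  have hevent : Δ.powerset.filter (fun X => lowerCore Δ X = Y) =
      Δ.powerset.filter (fun X => Y ⊆ X ∧ Disjoint (minimalNonfaces Δ Y) X) :=
    filter_congr fun _ _ => lowerCore_eq_iff hYΔ hY
  have hsum := sum_bernoulliWeight_filter_superset_disjoint (p := p) hYΔ minimalNonfaces_subset
    disjoint_minimalNonfaces
  rw [← hevent] at hsum
  -- The statement decides `∀ ρ ∈ Δ` through the `Fintype` instance of `Finset (Fin (n + 1))`,
  -- so it agrees with `lowerCore` and `minimalNonfaces` only up to `Decidable` instances.
  convert hsum using 3 <;> simp only [bernoulliWeight, lowerCore, minimalNonfaces] <;> congr! 2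

/-- In the multi-parameter lower model on `Δⁿ`, where the random hypergraph
`X` includes each simplex `σ` independently with probability `p σ`, the probability that
the maximal simplicial complex contained in `X` equals a fixed simplicial complex `Y` is
`(∏_{σ ∈ Y} p σ) · (∏_{σ ∈ E(Y)} (1 − p σ))`, where `E(Y)` is the set of minimal
simplices not in `Y`. -/
theorem lower_model_probability (n : ℕ) (p : Finset (Fin (n + 1)) → ℝ)
    (hp : ∀ σ, 0 ≤ p σ ∧ p σ ≤ 1)
    (Δ : Finset (Finset (Fin (n + 1)))) (hΔ : Δ = univ.filter (fun σ => σ ≠ ∅))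
    (Y : Finset (Finset (Fin (n + 1)))) (hYΔ : Y ⊆ Δ)
    (hYdc : ∀ σ ∈ Y, ∀ ρ : Finset (Fin (n + 1)), ρ ⊆ σ → ρ ≠ ∅ → ρ ∈ Y) :
    ∑ X ∈ Δ.powerset.filter
        (fun X => Δ.filter (fun σ => σ ∈ X ∧ ∀ ρ ∈ Δ, ρ ⊆ σ → ρ ∈ X) = Y),
      ((∏ σ ∈ X, p σ) * ∏ σ ∈ Δ \ X, (1 - p σ)) =
    (∏ σ ∈ Y, p σ) *
      ∏ σ ∈ Δ.filter (fun σ => σ ∉ Y ∧ ∀ ρ ∈ Δ, ρ ⊂ σ → ρ ∈ Y), (1 - p σ) :=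
  lower_model_probability_general n p Δ hΔ Y hYΔ hYdc
end

section
/- Let X be a finite hypergraph, k ≥ 0, X_{k⁺} the simplices of X of dimension ≥ k, f_k the number of k-simplices contained in some element of X_{k⁺}, and ĝ_k = ∑_{τ ∈ X_{k⁺}} C(dim τ + 1, k+1). Call τ ∈ X_{k⁺} k-bad if there exists τ' ∈ X_{k⁺}, τ' ≠ τ, with dim(τ ∩ τ') ≥ k, and let B_k be the number of k-bad simplices. Then B_k ≤ 2(ĝ_k − f_k). -/
open Finset

/-- With `X_{k⁺}` the simplices of the finite hypergraph `X` of dimension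
`≥ k`, `f_k` the number of `k`-simplices contained in some element of `X_{k⁺}`,
`ĝ_k = ∑_{τ ∈ X_{k⁺}} C(dim τ + 1, k+1)`, and `B_k` the number of `k`-bad simplices
(those `τ ∈ X_{k⁺}` meeting some other `τ' ∈ X_{k⁺}` in dimension `≥ k`),
we have `B_k ≤ 2(ĝ_k − f_k)`. -/
theorem bad_simplices_bound {V : Type*} [Fintype V] [DecidableEq V]
    (X : Finset (Finset V)) (k : ℕ)
    (Xk : Finset (Finset V)) (hXk : Xk = X.filter (fun τ => k + 1 ≤ τ.card)) :
    ((Xk.filter (fun τ => ∃ τ' ∈ Xk, τ' ≠ τ ∧ k + 1 ≤ (τ ∩ τ').card)).card : ℤ) ≤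
      2 * ((∑ τ ∈ Xk, (τ.card.choose (k + 1) : ℤ)) -
        ((univ.filter (fun σ : Finset V =>
            σ.card = k + 1 ∧ ∃ τ ∈ Xk, σ ⊆ τ)).card : ℤ)) := by
  classical
  set A := (univ : Finset V).powersetCard (k+1) with hA
  set m : Finset V → ℕ := fun σ => (Xk.filter (fun τ => σ ⊆ τ)).card with hm
  set F := A.filter (fun σ => 1 ≤ m σ) with hF
  -- ĝ as a sum of multiplicities
  have hgsum : ∑ τ ∈ Xk, (τ.card.choose (k + 1) : ℤ) = ∑ σ ∈ A, (m σ : ℤ) := by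
    have h1 : ∀ τ ∈ Xk, (τ.card.choose (k+1) : ℤ)
        = ∑ σ ∈ A, (if σ ⊆ τ then (1:ℤ) else 0) := by
      intro τ _
      rw [Finset.sum_boole]
      have : A.filter (fun σ => σ ⊆ τ) = τ.powersetCard (k+1) := by
        ext σ
        simp [hA, Finset.mem_powersetCard, Finset.subset_univ, and_comm]
      simp [this, Finset.card_powersetCard]
    rw [Finset.sum_congr rfl h1, Finset.sum_comm]
    refine Finset.sum_congr rfl ?_
    intro σ _
    rw [Finset.sum_boole]
  -- f as the cardinality of F
  have hFeq : univ.filter (fun σ : Finset V => σ.card = k + 1 ∧ ∃ τ ∈ Xk, σ ⊆ τ) = F := by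
    ext σ
    simp only [hF, hA, Finset.mem_filter, Finset.mem_univ, true_and,
      Finset.mem_powersetCard, Finset.subset_univ]
    constructor
    · rintro ⟨hc, τ, hτ, hsub⟩
      exact ⟨hc, Finset.card_pos.2 ⟨τ, Finset.mem_filter.2 ⟨hτ, hsub⟩⟩⟩
    · rintro ⟨hc, hpos⟩
      obtain ⟨τ, hτ⟩ := Finset.card_pos.1 hpos
      rw [Finset.mem_filter] at hτ
      exact ⟨hc, τ, hτ.1, hτ.2⟩
  -- restrict the sum to F
  have hsumF : ∑ σ ∈ A, (m σ : ℤ) = ∑ σ ∈ F, (m σ : ℤ) := by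
    rw [hF]
    rw [Finset.sum_filter_of_ne]
    intro σ _ h
    have : m σ ≠ 0 := by
      intro h0; apply h; simp [h0]
    omega
  set F2 := F.filter (fun σ => 2 ≤ m σ) with hF2
  -- bad simplices are covered
  have hcover : Xk.filter (fun τ => ∃ τ' ∈ Xk, τ' ≠ τ ∧ k + 1 ≤ (τ ∩ τ').card)
      ⊆ F2.biUnion (fun σ => Xk.filter (fun τ => σ ⊆ τ)) := by
    intro τ hτ
    rw [Finset.mem_filter] at hτ
    obtain ⟨hτXk, τ', hτ', hne, hcard⟩ := hτ
    obtain ⟨σ, hσsub, hσcard⟩ := Finset.exists_subset_card_eq hcard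
    have hστ : σ ⊆ τ := hσsub.trans Finset.inter_subset_left
    have hστ' : σ ⊆ τ' := hσsub.trans Finset.inter_subset_right
    have h2 : 2 ≤ m σ := by
      have : 1 < (Xk.filter (fun t => σ ⊆ t)).card := by
        rw [Finset.one_lt_card]
        exact ⟨τ, by simp [hτXk, hστ], τ', by simp [hτ', hστ'], fun h => hne h.symm⟩
      exact this
    refine Finset.mem_biUnion.2 ⟨σ, ?_, ?_⟩
    · simp only [hF2, hF, hA, Finset.mem_filter, Finset.mem_powersetCard]
      exact ⟨⟨⟨Finset.subset_univ σ, hσcard⟩, by omega⟩, h2⟩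
    · simp [hτXk, hστ]
  have hB : ((Xk.filter (fun τ => ∃ τ' ∈ Xk, τ' ≠ τ ∧ k + 1 ≤ (τ ∩ τ').card)).card : ℤ)
      ≤ ∑ σ ∈ F2, (m σ : ℤ) := by
    have := (Finset.card_le_card hcover).trans (Finset.card_biUnion_le)
    exact_mod_cast this
  rw [hgsum, hsumF, hFeq]
  calc ((Xk.filter (fun τ => ∃ τ' ∈ Xk, τ' ≠ τ ∧ k + 1 ≤ (τ ∩ τ').card)).card : ℤ)
        ≤ ∑ σ ∈ F2, (m σ : ℤ) := hB
      _ ≤ ∑ σ ∈ F2, 2 * ((m σ : ℤ) - 1) := by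
          refine Finset.sum_le_sum ?_
          intro σ hσ
          have : 2 ≤ m σ := (Finset.mem_filter.1 hσ).2
          have : (2:ℤ) ≤ (m σ : ℤ) := by exact_mod_cast this
          linarith
      _ ≤ ∑ σ ∈ F, 2 * ((m σ : ℤ) - 1) := by
          refine Finset.sum_le_sum_of_subset_of_nonneg (Finset.filter_subset _ _) ?_
          intro σ hσ _
          have : 1 ≤ m σ := (Finset.mem_filter.1 hσ).2
          have : (1:ℤ) ≤ (m σ : ℤ) := by exact_mod_cast this
          linarith
      _ = 2 * ∑ σ ∈ F, ((m σ : ℤ) - (1:ℤ)) := by rw [Finset.mul_sum]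
      _ = 2 * ((∑ σ ∈ F, (m σ : ℤ)) - F.card) := by
          rw [Finset.sum_sub_distrib]; simp
end

section
/- For every k < i and all sufficiently large n there exists a function h from the i-element-plus-one subsets of {0,…,n} (i.e., (i+1)-subsets, 'i-simplices') to the (k+1)-subsets ('k-simplices') such that (1) h(τ) ⊆ τ for every i-simplex τ, and (2) |h^{-1}(σ)| ≥ C(n−k, i−k) / (2·C(i+1, k+1)) for every k-simplex σ. -/
open Finset

/-!
Hall's theorem replaces the random choice. Let `D = C(n-k, i-k)` be the number of `i`-simplices
containing a `k`-simplex and `M = C(i+1, k+1)` the number of `k`-faces of an `i`-simplex, and take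
`t = ⌊D / M⌋` copies of every `k`-simplex. Each copy has `D` cofaces and each `i`-simplex is a
coface of at most `M` distinct `k`-simplices, so double counting verifies Hall's condition and the
copies can be matched injectively to cofaces. Sending each matched `i`-simplex back to its
`k`-simplex (and any other one to an arbitrary face) gives fibres of size at least
`t ≥ D / (2M)` as soon as `D ≥ M`, which holds for large `n`.
-/

theorem cast_div_two_mul_le_cast_div {a b : ℕ} (hb : 0 < b) (hba : b ≤ a) :
    (a : ℝ) / (2 * b) ≤ (a / b : ℕ) := by
  have hq : 1 ≤ a / b := (Nat.one_le_div_iff hb).2 hba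
  have hlt : a < a / b * b + b := Nat.lt_div_mul_add hb
  have hle : a ≤ 2 * b * (a / b) := by nlinarith
  rw [div_le_iff₀ (by positivity)]
  exact_mod_cast (by linarith : a ≤ a / b * (2 * b))

theorem Nat.sub_add_one_le_choose {m r : ℕ} (hr : 0 < r) (hrm : r ≤ m) :
    m - r + 1 ≤ m.choose r := by
  rw [← Nat.choose_symm hrm, ← Nat.choose_succ_self_right]
  exact Nat.choose_le_choose _ (by omega)

theorem exists_injective_prod_fin_of_degree_bounds {ι β : Type*} [Fintype ι] [DecidableEq β]
    (N : ι → Finset β) {D M t : ℕ} (hM : 0 < M) (htM : t * M ≤ D)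
    (hN : ∀ a, D ≤ #(N a)) (hdeg : ∀ b, #{a | b ∈ N a} ≤ M) :
    ∃ f : ι × Fin t → β, Function.Injective f ∧ ∀ p, f p ∈ N p.1 := by
  classical
  refine (all_card_le_biUnion_card_iff_exists_injective fun p : ι × Fin t => N p.1).mp fun s => ?_
  set P := s.image Prod.fst
  have hs : #s ≤ #P * t :=
    calc #s ≤ #(P ×ˢ (univ : Finset (Fin t))) :=
          card_le_card fun p hp => mem_product.2 ⟨mem_image_of_mem _ hp, mem_univ _⟩
      _ = #P * t := by rw [card_product, card_fin]
  have hcount : #P * D ≤ #(P.biUnion N) * M :=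
    card_mul_le_card_mul (fun a b => b ∈ N a)
      (fun a ha => (hN a).trans <| card_le_card fun b hb =>
        mem_filter.2 ⟨mem_biUnion.2 ⟨a, ha, hb⟩, hb⟩)
      (fun b _ => (card_le_card (filter_subset_filter _ (subset_univ P))).trans (hdeg b))
  have hunion : s.biUnion (fun p => N p.1) = P.biUnion N := by
    rw [image_biUnion]
  rw [hunion]
  refine hs.trans (Nat.le_of_mul_le_mul_right ?_ hM)
  calc #P * t * M = #P * (t * M) := mul_assoc _ _ _
    _ ≤ #P * D := Nat.mul_le_mul_left _ htM
    _ ≤ #(P.biUnion N) * M := hcount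

theorem exists_face_choice_of_mul_choose_le {V : Type*} [Fintype V] [DecidableEq V]
    {k i t : ℕ} (hki : k ≤ i)
    (ht : t * (i + 1).choose (k + 1) ≤ (Fintype.card V - (k + 1)).choose (i - k)) :
    ∃ h : Finset V → Finset V,
      (∀ τ : Finset V, #τ = i + 1 → h τ ⊆ τ ∧ #(h τ) = k + 1) ∧
      ∀ σ : Finset V, #σ = k + 1 → t ≤ #{τ | #τ = i + 1 ∧ h τ = σ} := by
  set N : {σ : Finset V // #σ = k + 1} → Finset (Finset V) :=
    fun σ => (univ.powersetCard (i + 1)).filter (σ.1 ⊆ ·)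
  have hN : ∀ σ, (Fintype.card V - (k + 1)).choose (i - k) ≤ #(N σ) := fun σ => by
    rw [card_filter_powersetCard_subset _ _ _ (subset_univ _) (by omega), σ.2, card_univ,
      Nat.add_sub_add_right]
  have hdeg : ∀ τ, #{σ | τ ∈ N σ} ≤ (i + 1).choose (k + 1) := by
    intro τ
    by_cases hτ : #τ = i + 1
    · rw [← hτ, ← card_powersetCard]
      refine card_le_card_of_injOn Subtype.val (fun σ hσ => ?_) Subtype.val_injective.injOn
      simp only [N, coe_filter, mem_filter, mem_univ, mem_powersetCard, subset_univ, true_and,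
        Set.mem_ofPred_eq, SetLike.mem_coe] at hσ ⊢
      exact ⟨hσ.2, σ.2⟩
    · simp [N, hτ]
  obtain ⟨f, hf_inj, hf⟩ :=
    exists_injective_prod_fin_of_degree_bounds N (Nat.choose_pos (by omega)) ht hN hdeg
  simp only [N, mem_filter, mem_powersetCard, subset_univ, true_and] at hf
  have hface : ∀ τ : Finset V, ∃ σ, k + 1 ≤ #τ → σ ⊆ τ ∧ #σ = k + 1 := fun τ =>
    if hτ : k + 1 ≤ #τ then (exists_subset_card_eq hτ).imp fun _ hσ _ => hσ
    else ⟨∅, fun h => absurd h hτ⟩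
  choose g hg using hface
  refine ⟨Function.extend f (fun p => p.1.1) g, fun τ hτ => ?_, fun σ hσ => ?_⟩
  · by_cases hrange : ∃ p, f p = τ
    · obtain ⟨p, rfl⟩ := hrange
      rw [hf_inj.extend_apply]
      exact ⟨(hf p).2, p.1.2⟩
    · rw [Function.extend_apply' _ _ _ hrange]
      exact hg τ (by omega)
  · calc t = #(univ : Finset (Fin t)) := (card_fin t).symm
      _ ≤ _ := card_le_card_of_injOn (fun j => f (⟨σ, hσ⟩, j))
        (fun j _ => by simp [(hf _).1, hf_inj.extend_apply])
        (fun a _ b _ hab => congrArg Prod.snd (hf_inj hab))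

/-- For every `k < i` and all sufficiently large `n` there exists a
function `h` from the `i`-simplices ((i+1)-subsets) of `{0,…,n}` to the `k`-simplices
((k+1)-subsets) such that `h(τ) ⊆ τ` for every `i`-simplex `τ`, and
`|h⁻¹(σ)| ≥ C(n−k, i−k) / (2·C(i+1, k+1))` for every `k`-simplex `σ`. -/
theorem exists_face_choice_function (k i : ℕ) (hki : k < i) :
    ∃ n₀ : ℕ, ∀ n ≥ n₀,
      ∃ h : Finset (Fin (n + 1)) → Finset (Fin (n + 1)),
        (∀ τ : Finset (Fin (n + 1)), τ.card = i + 1 → h τ ⊆ τ ∧ (h τ).card = k + 1) ∧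
        (∀ σ : Finset (Fin (n + 1)), σ.card = k + 1 →
          ((n - k).choose (i - k) : ℝ) / (2 * ((i + 1).choose (k + 1) : ℝ)) ≤
            ((univ.filter (fun τ : Finset (Fin (n + 1)) =>
              τ.card = i + 1 ∧ h τ = σ)).card : ℝ)) := by
  set M := (i + 1).choose (k + 1)
  refine ⟨i + M, fun n hn => ?_⟩
  have hM : 0 < M := Nat.choose_pos (by omega)
  have hMD : M ≤ (n - k).choose (i - k) :=
    le_trans (by omega) (Nat.sub_add_one_le_choose (m := n - k) (by omega) (by omega))
  obtain ⟨h, hface, hfibre⟩ := exists_face_choice_of_mul_choose_le (V := Fin (n + 1))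
    (t := (n - k).choose (i - k) / M) hki.le (by simpa using Nat.div_mul_le_self _ M)
  refine ⟨h, hface, fun σ hσ => ?_⟩
  exact (cast_div_two_mul_le_cast_div hM hMD).trans (by exact_mod_cast hfibre σ hσ)
end

section
/- Let ℓ ≥ 1, let K be the full (ℓ−1)-skeleton on vertex set {0,…,n} with n ≥ ℓ+1, and let Y be a simplicial complex on the same vertex set. If the reduced (ℓ−1)-st simplicial homology of K ∪ Y with integer coefficients vanishes, then Y contains K (every (ℓ−1)-simplex on {0,…,n} is in Y). -/
open Finset

/-- The simplicial boundary operator on integer chains over the vertex set `Fin N`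
(with its natural ordering): a `j`-chain is a function on the `(j+1)`-element subsets,
and `(∂c)(ρ) = ∑_{v ∉ ρ} (−1)^{pos of v in ρ ∪ {v}} · c(ρ ∪ {v})`.  Applied to a
`0`-chain at `ρ = ∅` this is the augmentation, so cycles are reduced cycles. -/
def simplicialBoundary {N : ℕ} (c : Finset (Fin N) → ℤ) (ρ : Finset (Fin N)) : ℤ :=
  ∑ v ∈ ρᶜ, (-1 : ℤ) ^ ((ρ.filter (fun w => w < v)).card) * c (insert v ρ)

namespace Skel18

def delta {N : ℕ} (τ : Finset (Fin N)) : Finset (Fin N) → ℤ := fun s => if s = τ then 1 else 0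

lemma boundary_delta_eq {N : ℕ} (σ : Finset (Fin N)) (w : Fin N) (hw : w ∉ σ) :
    simplicialBoundary (delta (insert w σ)) σ
      = (-1 : ℤ) ^ ((σ.filter (fun x => x < w)).card) := by
  unfold simplicialBoundary delta
  rw [Finset.sum_eq_single w]
  · simp
  · intro a ha hne
    have hins : insert a σ ≠ insert w σ := by
      intro h
      have : a ∈ insert w σ := h ▸ mem_insert_self a σ
      rcases mem_insert.1 this with h' | h'
      · exact hne h'
      · exact (mem_compl.1 ha) h'
    simp [hins]
  · intro h
    exact absurd (mem_compl.2 hw) h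

lemma boundary_delta_zero {N : ℕ} (σ τ : Finset (Fin N))
    (h : ∀ w ∉ σ, insert w σ ≠ τ) :
    simplicialBoundary (delta τ) σ = 0 := by
  unfold simplicialBoundary delta
  apply Finset.sum_eq_zero
  intro v hv
  simp [h v (mem_compl.1 hv)]

lemma sign_key {N : ℕ} (ρ : Finset (Fin N)) (u v : Fin N) (huv : u < v)
    (hu : u ∉ ρ) (hv : v ∉ ρ) :
    (-1 : ℤ) ^ ((ρ.filter (fun x => x < u)).card)
        * (-1 : ℤ) ^ (((insert u ρ).filter (fun x => x < v)).card)
      + (-1 : ℤ) ^ ((ρ.filter (fun x => x < v)).card)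
        * (-1 : ℤ) ^ (((insert v ρ).filter (fun x => x < u)).card) = 0 := by
  have h1 : (insert u ρ).filter (fun x => x < v)
      = insert u (ρ.filter (fun x => x < v)) := by
    rw [filter_insert, if_pos huv]
  have h2 : (insert v ρ).filter (fun x => x < u) = ρ.filter (fun x => x < u) := by
    rw [filter_insert, if_neg (not_lt.2 huv.le)]
  rw [h1, h2, card_insert_of_notMem (fun h => hu (mem_filter.1 h).1), pow_succ]
  ring

lemma boundary_boundary_delta {N : ℕ} (τ ρ : Finset (Fin N))
    (hcard : ρ.card + 2 = τ.card) :
    simplicialBoundary (simplicialBoundary (delta τ)) ρ = 0 := by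
  show ∑ a ∈ ρᶜ, (-1 : ℤ) ^ ((ρ.filter (fun w => w < a)).card)
      * simplicialBoundary (delta τ) (insert a ρ) = 0
  by_cases hsub : ρ ⊆ τ
  · have hd : (τ \ ρ).card = 2 := by rw [card_sdiff_of_subset hsub]; omega
    obtain ⟨u, v, huv, hset⟩ := card_eq_two.1 hd
    have huτ : u ∈ τ \ ρ := by rw [hset]; simp
    have hvτ : v ∈ τ \ ρ := by rw [hset]; simp
    have huρ : u ∉ ρ := (mem_sdiff.1 huτ).2
    have hvρ : v ∉ ρ := (mem_sdiff.1 hvτ).2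
    have hτ : insert u (insert v ρ) = τ := by
      rw [← Finset.union_sdiff_of_subset hsub, hset]
      ext a
      simp only [mem_insert, mem_union, mem_singleton]
      tauto
    have hτ' : insert v (insert u ρ) = τ := by rw [Finset.insert_comm]; exact hτ
    have hzero : ∀ a ∈ ρᶜ, a ∉ ({u, v} : Finset (Fin N)) →
        (-1 : ℤ) ^ ((ρ.filter (fun w => w < a)).card)
          * simplicialBoundary (delta τ) (insert a ρ) = 0 := by
      intro a ha hna
      have : simplicialBoundary (delta τ) (insert a ρ) = 0 := by
        apply boundary_delta_zero
        intro w hw heq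
        apply hna
        have haτ : a ∈ τ := by
          rw [← heq]; exact mem_insert_of_mem (mem_insert_self a ρ)
        have : a ∈ τ \ ρ := mem_sdiff.2 ⟨haτ, mem_compl.1 ha⟩
        rw [hset] at this; exact this
      rw [this, mul_zero]
    have hsub' : ({u, v} : Finset (Fin N)) ⊆ ρᶜ := by
      intro a ha
      rcases mem_insert.1 ha with h | h
      · subst h; exact mem_compl.2 huρ
      · rw [mem_singleton.1 h]; exact mem_compl.2 hvρ
    rw [← Finset.sum_subset hsub' hzero, Finset.sum_pair huv]
    have h1 : simplicialBoundary (delta τ) (insert u ρ)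
        = (-1 : ℤ) ^ (((insert u ρ).filter (fun x => x < v)).card) := by
      rw [← hτ']
      exact boundary_delta_eq _ _ (by simp [hvρ, (Ne.symm huv)])
    have h2 : simplicialBoundary (delta τ) (insert v ρ)
        = (-1 : ℤ) ^ (((insert v ρ).filter (fun x => x < u)).card) := by
      rw [← hτ]
      exact boundary_delta_eq _ _ (by simp [huρ, huv])
    rw [h1, h2]
    rcases huv.lt_or_gt with h | h
    · exact sign_key ρ u v h huρ hvρ
    · have := sign_key ρ v u h hvρ huρ
      linarith
  · apply Finset.sum_eq_zero
    intro a ha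
    have : simplicialBoundary (delta τ) (insert a ρ) = 0 := by
      apply boundary_delta_zero
      intro w hw heq
      exact hsub (fun x hx => heq ▸ mem_insert_of_mem (mem_insert_of_mem hx))
    rw [this, mul_zero]

end Skel18

/-- Let `ℓ ≥ 1`, let `K` be the full `(ℓ−1)`-skeleton on the vertex set
`{0,…,n}` with `n ≥ ℓ+1`, and let `Y` be a simplicial complex on the same vertex set.
If the reduced `(ℓ−1)`-st simplicial homology of `K ∪ Y` with integer coefficients
vanishes (every reduced `(ℓ−1)`-cycle — a chain supported on the cardinality-`ℓ`
subsets, all of which are simplices of `K ∪ Y` — is the boundary of an `ℓ`-chain of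
`K ∪ Y`, necessarily supported on `ℓ`-simplices of `Y`), then `Y` contains `K`:
every `(ℓ−1)`-simplex on `{0,…,n}` is in `Y`. -/
theorem homology_vanishing_implies_full_skeleton (n ℓ : ℕ) (hℓ : 1 ≤ ℓ)
    (hn : ℓ + 1 ≤ n)
    (Y : Set (Finset (Fin (n + 1)))) (hY0 : ∅ ∉ Y)
    (hYdc : ∀ σ ∈ Y, ∀ ρ : Finset (Fin (n + 1)), ρ ⊆ σ → ρ ≠ ∅ → ρ ∈ Y)
    (hH : ∀ c : Finset (Fin (n + 1)) → ℤ,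
      (∀ σ, c σ ≠ 0 → σ.card = ℓ) →
      (∀ ρ : Finset (Fin (n + 1)), ρ.card + 1 = ℓ → simplicialBoundary c ρ = 0) →
      ∃ b : Finset (Fin (n + 1)) → ℤ,
        (∀ σ, b σ ≠ 0 → σ.card = ℓ + 1 ∧ σ ∈ Y) ∧ simplicialBoundary b = c) :
    ∀ σ : Finset (Fin (n + 1)), σ.card = ℓ → σ ∈ Y := by
  intro σ hσ
  obtain ⟨x, hx⟩ : ∃ x, x ∉ σ := by
    by_contra h
    push_neg at h
    have huniv : σ = univ := eq_univ_of_forall h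
    have : σ.card = n + 1 := by rw [huniv, card_univ, Fintype.card_fin]
    omega
  have hτcard : (insert x σ).card = ℓ + 1 := by
    rw [card_insert_of_notMem hx, hσ]
  obtain ⟨b, hb, hbc⟩ := hH (simplicialBoundary (Skel18.delta (insert x σ)))
    (by
      intro s hs
      by_contra hne
      apply hs
      apply Skel18.boundary_delta_zero
      intro w hw heq
      apply hne
      have := congrArg Finset.card heq
      rw [card_insert_of_notMem hw, hτcard] at this
      omega)
    (by
      intro ρ hρ
      exact Skel18.boundary_boundary_delta _ _ (by omega))
  have hcσ : simplicialBoundary (Skel18.delta (insert x σ)) σ ≠ 0 := by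
    rw [Skel18.boundary_delta_eq σ x hx]
    exact pow_ne_zero _ (by norm_num)
  rw [← hbc] at hcσ
  unfold simplicialBoundary at hcσ
  obtain ⟨a, ha, hne⟩ := Finset.exists_ne_zero_of_sum_ne_zero hcσ
  have hbne : b (insert a σ) ≠ 0 := fun h => hne (by rw [h, mul_zero])
  obtain ⟨_, hmem⟩ := hb _ hbne
  exact hYdc _ hmem σ (subset_insert a σ)
    (Finset.card_pos.1 (by omega)).ne_empty
end

section
/- Let τ be an i-simplex in a simplicial complex Y, let 1 ≤ k ≤ i, and suppose that for every j with k ≤ j ≤ i, every j-face of τ is contained in no simplex of Y other than faces of τ (τ is 'k-good' and maximal in this sense). Then Y collapses onto a subcomplex Y' in which all j-faces of τ with j > k are removed, all j-faces with j < k remain, and exactly C(i,k) of the C(i+1,k+1) k-faces of τ remain; moreover each removed pair in the collapse sequence is a free face pair. -/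
/-!
Pick a vertex `v` of `τ` and let `τ₀ = τ \ {v}`. Since `τ` is a cone `v * τ₀`, the faces of `τ`
of dimension `> k` pair off as `(ρ, v * ρ)` with `ρ` a face of `τ₀` of dimension `≥ k`.
Removing these pairs in order of decreasing `|ρ|` is a sequence of elementary collapses: by
goodness every simplex of `Y` above `ρ` is a face of `τ`, hence of the form `ρ'` or `v * ρ'`
with `ρ ⊆ ρ'`, and all of these except `v * ρ` were removed before. What remains of `τ` are the
faces of dimension `< k` and the `C(i, k)` cones `v * ρ` over the `(k-1)`-faces `ρ` of `τ₀`.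
-/

open Finset

/-- `Collapses Z W` : the finite family of simplices `Z` can be transformed into `W`
by a sequence of elementary collapses, each removing a free face pair `(ρ, ρ ∪ {v})`
where `ρ ∪ {v}` is the unique simplex of the current complex strictly containing `ρ`. -/
inductive Collapses {V : Type*} [DecidableEq V] :
    Finset (Finset V) → Finset (Finset V) → Prop
  | refl (Z : Finset (Finset V)) : Collapses Z Z
  | step (Z W : Finset (Finset V)) (ρ σ : Finset V) (v : V)
      (hρ : ρ ∈ Z) (hσ : σ ∈ Z) (hv : v ∉ ρ) (hσρ : σ = insert v ρ)
      (huniq : ∀ π ∈ Z, ρ ⊂ π → π = σ)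
      (h : Collapses (Z \ {ρ, σ}) W) : Collapses Z W

theorem Finset.erase_eq_iff_eq_or_eq_insert {α : Type*} [DecidableEq α] {s t : Finset α}
    {a : α} (ha : a ∉ t) : s.erase a = t ↔ s = t ∨ s = insert a t := by
  grind

section

variable {V : Type*} [DecidableEq V]

theorem collapses_filter_erase_notMem (v : V) (S Y : Finset (Finset V))
    (hvS : ∀ ρ ∈ S, v ∉ ρ) (hSY : ∀ ρ ∈ S, ρ ∈ Y) (hSvY : ∀ ρ ∈ S, insert v ρ ∈ Y)
    (hup : ∀ ρ ∈ S, ∀ π ∈ Y, ρ ⊆ π → π.erase v ∈ S) :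
    Collapses Y (Y.filter fun π => π.erase v ∉ S) := by
  induction S using Finset.strongInduction generalizing Y with
  | H S ih =>
  rcases S.eq_empty_or_nonempty with rfl | hne
  · simpa using Collapses.refl Y
  obtain ⟨ρ, hρS, hρmax⟩ := S.exists_max_image card hne
  have hpair : ∀ π, π.erase v = ρ ↔ π = ρ ∨ π = insert v ρ :=
    fun π => erase_eq_iff_eq_or_eq_insert (hvS ρ hρS)
  refine .step Y _ ρ _ v (hSY ρ hρS) (hSvY ρ hρS) (hvS ρ hρS) rfl ?_ ?_
  · intro π hπY hρπ
    have hπS := hup ρ hρS π hπY hρπ.subset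
    obtain h | h := (subset_erase.mpr ⟨hρπ.subset, hvS ρ hρS⟩).eq_or_ssubset
    · exact ((hpair π).mp h.symm).resolve_left hρπ.ne'
    · exact absurd (hρmax _ hπS) (not_le.mpr (card_lt_card h))
  · have hmem : ∀ π ∈ Y, π.erase v ≠ ρ → π ∈ Y \ {ρ, insert v ρ} := by
      intro π hπ hπρ
      simpa [mem_sdiff, hπ, ← hpair] using hπρ
    have hrest : (Y \ {ρ, insert v ρ}).filter (fun π => π.erase v ∉ S.erase ρ) =
        Y.filter fun π => π.erase v ∉ S := by
      ext π
      simp only [mem_filter, mem_sdiff, mem_erase, mem_insert, mem_singleton, ← hpair]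
      grind
    rw [← hrest]
    refine ih _ (erase_ssubset hρS) _ (fun σ hσ => hvS σ (mem_of_mem_erase hσ)) ?_ ?_ ?_
    · intro σ hσ
      obtain ⟨hσρ, hσS⟩ := mem_erase.mp hσ
      exact hmem σ (hSY σ hσS) (by rwa [erase_eq_of_notMem (hvS σ hσS)])
    · intro σ hσ
      obtain ⟨hσρ, hσS⟩ := mem_erase.mp hσ
      exact hmem _ (hSvY σ hσS) (by rwa [erase_insert (hvS σ hσS)])
    · intro σ hσ π hπ hσπ
      obtain ⟨hπY, hπρ⟩ := mem_sdiff.mp hπ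
      refine mem_erase.mpr ⟨fun h => hπρ ?_, hup σ (mem_of_mem_erase hσ) π hπY hσπ⟩
      simpa [← hpair] using h

def oppositeFacesDimGe (τ : Finset V) (v : V) (k : ℕ) : Finset (Finset V) :=
  (τ.erase v).powerset.filter (k + 1 ≤ ·.card)

theorem mem_oppositeFacesDimGe {τ ρ : Finset V} {v : V} {k : ℕ} :
    ρ ∈ oppositeFacesDimGe τ v k ↔ (ρ ⊆ τ ∧ v ∉ ρ) ∧ k + 1 ≤ ρ.card := by
  rw [oppositeFacesDimGe, mem_filter, mem_powerset, subset_erase]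

theorem erase_mem_oppositeFacesDimGe {τ π : Finset V} {v : V} (hv : v ∈ τ) (k : ℕ) :
    π.erase v ∈ oppositeFacesDimGe τ v k ↔ π ⊆ τ ∧ k + 1 ≤ (π.erase v).card := by
  rw [oppositeFacesDimGe, mem_filter, mem_powerset, ← subset_insert_iff, insert_erase hv]

theorem collapses_filter_erase_notMem_oppositeFacesDimGe (Y : Finset (Finset V))
    {τ : Finset V} {v : V} (hv : v ∈ τ) (k : ℕ) (hfaces : ∀ ρ ⊆ τ, ρ ≠ ∅ → ρ ∈ Y)
    (hgood : ∀ ρ ⊆ τ, k + 1 ≤ ρ.card → ∀ σ ∈ Y, ρ ⊆ σ → σ ⊆ τ) :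
    Collapses Y (Y.filter fun π => π.erase v ∉ oppositeFacesDimGe τ v k) := by
  refine collapses_filter_erase_notMem v _ Y
    (fun ρ hρ => (mem_oppositeFacesDimGe.mp hρ).1.2) ?_ ?_ ?_
  · intro ρ hρ
    obtain ⟨⟨hρτ, -⟩, hρk⟩ := mem_oppositeFacesDimGe.mp hρ
    exact hfaces ρ hρτ (card_pos.mp (by omega)).ne_empty
  · intro ρ hρ
    exact hfaces _ (insert_subset hv (mem_oppositeFacesDimGe.mp hρ).1.1) (insert_ne_empty v ρ)
  · intro ρ hρ π hπ hρπ
    obtain ⟨⟨hρτ, hvρ⟩, hρk⟩ := mem_oppositeFacesDimGe.mp hρ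
    refine (erase_mem_oppositeFacesDimGe hv k).mpr ⟨hgood ρ hρτ hρk π hπ hρπ, ?_⟩
    exact hρk.trans (card_le_card (subset_erase.mpr ⟨hρπ, hvρ⟩))

theorem filter_erase_notMem_oppositeFacesDimGe_filter_card_eq (Y : Finset (Finset V))
    {τ : Finset V} {v : V} (hv : v ∈ τ) (k : ℕ) (hfaces : ∀ ρ ⊆ τ, ρ ≠ ∅ → ρ ∈ Y) :
    ((Y.filter fun π => π.erase v ∉ oppositeFacesDimGe τ v k).filter
        fun ρ => ρ ⊆ τ ∧ ρ.card = k + 1) = (τ.powersetCard (k + 1)).filter ({v} ⊆ ·) := by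
  ext ρ
  simp only [mem_filter, mem_powersetCard, singleton_subset_iff,
    erase_mem_oppositeFacesDimGe hv, not_and, not_le]
  constructor
  · rintro ⟨⟨-, hρ⟩, hρτ, hρk⟩
    refine ⟨⟨hρτ, hρk⟩, by_contra fun hvρ => ?_⟩
    have := hρ hρτ
    rw [erase_eq_of_notMem hvρ] at this
    omega
  · rintro ⟨⟨hρτ, hρk⟩, hvρ⟩
    refine ⟨⟨hfaces ρ hρτ (ne_empty_of_mem hvρ), fun _ => ?_⟩, hρτ, hρk⟩
    rw [card_erase_of_mem hvρ]
    omega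

end

theorem good_simplex_collapse_general {V : Type*} [DecidableEq V]
    (Y : Finset (Finset V))
    (hYdc : ∀ σ ∈ Y, ∀ ρ : Finset V, ρ ⊆ σ → ρ ≠ ∅ → ρ ∈ Y)
    (τ : Finset V) (hτ : τ ∈ Y) (i k : ℕ) (hτi : τ.card = i + 1)
    (hgood : ∀ j, k ≤ j → j ≤ i → ∀ ρ ⊆ τ, ρ.card = j + 1 →
      ∀ σ ∈ Y, ρ ⊆ σ → σ ⊆ τ) :
    ∃ Y' : Finset (Finset V), Collapses Y Y' ∧ Y' ⊆ Y ∧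
      (∀ ρ ∈ Y, ρ ∉ Y' → ρ ⊆ τ) ∧
      (∀ ρ ⊆ τ, k + 1 < ρ.card → ρ ∉ Y') ∧
      (∀ ρ ⊆ τ, ρ ≠ ∅ → ρ.card < k + 1 → ρ ∈ Y') ∧
      (Y'.filter (fun ρ => ρ ⊆ τ ∧ ρ.card = k + 1)).card = i.choose k := by
  obtain ⟨v, hv⟩ : τ.Nonempty := card_pos.mp (by omega)
  have hfaces : ∀ ρ ⊆ τ, ρ ≠ ∅ → ρ ∈ Y := hYdc τ hτ
  have hgood' : ∀ ρ ⊆ τ, k + 1 ≤ ρ.card → ∀ σ ∈ Y, ρ ⊆ σ → σ ⊆ τ := fun ρ hρ hρk =>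
    hgood (ρ.card - 1) (by omega) (by have := card_le_card hρ; omega) ρ hρ (by omega)
  have hmem (π : Finset V) := erase_mem_oppositeFacesDimGe (π := π) hv k
  refine ⟨_, collapses_filter_erase_notMem_oppositeFacesDimGe Y hv k hfaces hgood',
    filter_subset _ _, ?_, ?_, ?_, ?_⟩
  · intro ρ hρY hρ
    simp only [mem_filter, hρY, true_and, not_not, hmem] at hρ
    exact hρ.1
  · intro ρ hρτ hρk hρ
    simp only [mem_filter, hmem, hρτ, true_and] at hρ
    have := pred_card_le_card_erase (s := ρ) (a := v)
    omega
  · intro ρ hρτ hρ hρk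
    simp only [mem_filter, hmem, hρτ, true_and, hfaces ρ hρτ hρ]
    have := card_erase_le (s := ρ) (a := v)
    omega
  · rw [filter_erase_notMem_oppositeFacesDimGe_filter_card_eq Y hv k hfaces,
      card_filter_powersetCard_subset _ _ _ (singleton_subset_iff.mpr hv) (by simp),
      hτi, card_singleton, Nat.add_sub_cancel, Nat.add_sub_cancel]

/-- Let `τ` be an `i`-simplex in a (finite) simplicial complex `Y`, let
`1 ≤ k ≤ i`, and suppose every `j`-face of `τ` with `k ≤ j ≤ i` is contained in no
simplex of `Y` other than faces of `τ`.  Then `Y` collapses (through free face pairs,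
all of which are faces of `τ`) onto a subcomplex `Y'` in which all `j`-faces of `τ`
with `j > k` are removed, all `j`-faces with `j < k` remain, and exactly `C(i,k)` of
the `k`-faces of `τ` remain. -/
theorem good_simplex_collapse {V : Type*} [Fintype V] [DecidableEq V]
    (Y : Finset (Finset V)) (hY0 : ∅ ∉ Y)
    (hYdc : ∀ σ ∈ Y, ∀ ρ : Finset V, ρ ⊆ σ → ρ ≠ ∅ → ρ ∈ Y)
    (τ : Finset V) (hτ : τ ∈ Y) (i k : ℕ) (hτi : τ.card = i + 1)
    (hk1 : 1 ≤ k) (hki : k ≤ i)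
    (hgood : ∀ j, k ≤ j → j ≤ i → ∀ ρ ⊆ τ, ρ.card = j + 1 →
      ∀ σ ∈ Y, ρ ⊆ σ → σ ⊆ τ) :
    ∃ Y' : Finset (Finset V), Collapses Y Y' ∧ Y' ⊆ Y ∧
      (∀ ρ ∈ Y, ρ ∉ Y' → ρ ⊆ τ) ∧
      (∀ ρ ⊆ τ, k + 1 < ρ.card → ρ ∉ Y') ∧
      (∀ ρ ⊆ τ, ρ ≠ ∅ → ρ.card < k + 1 → ρ ∈ Y') ∧
      (Y'.filter (fun ρ => ρ ⊆ τ ∧ ρ.card = k + 1)).card = i.choose k :=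
  good_simplex_collapse_general Y hYdc τ hτ i k hτi hgood
end
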